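/- arXiv:1507.00622 — 4 statements merged into one kernel-verified Lean document; each statement's English description precedes it below -/
import Mathlib

section
/- Let G be a profinite group and N a closed normal subgroup of G. If N (with the subspace topology) and the quotient topological group G/N are both slim, then G is slim. -/
/-- A topological group is *slim* if every open subgroup has trivial center. -/
def IsSlim (G : Type*) [Group G] [TopologicalSpace G] : Prop :=
  ∀ H : Subgroup G, IsOpen (H : Set G) → Subgroup.center ↥H = ⊥

/-!
If `z` is central in an open subgroup `H` of `G`, its image is central in the open subgroup
`HN/N` of `G/N`, so `z ∈ N` by slimness of `G/N`. Then `z` is central in the open subgroup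
`H ∩ N` of `N`, so `z = 1` by slimness of `N`.
-/

open Subgroup

section

variable {G : Type*} [Group G]

theorem MonoidHom.subgroupMap_mem_center {Q : Type*} [Group Q] (f : G →* Q) {H : Subgroup G}
    {z : H} (hz : z ∈ center H) : f.subgroupMap H z ∈ center (H.map f) := by
  rw [mem_center_iff] at hz ⊢
  intro y
  obtain ⟨h, rfl⟩ := f.subgroupMap_surjective H y
  rw [← map_mul, ← map_mul, hz]

theorem Subgroup.mem_center_subgroupOf {H K : Subgroup G} {z : H} (hz : z ∈ center H)
    (hzK : (z : G) ∈ K) : (⟨⟨z, hzK⟩, z.2⟩ : H.subgroupOf K) ∈ center (H.subgroupOf K) := by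
  rw [mem_center_iff] at hz ⊢
  rintro ⟨⟨w, hwK⟩, hwH⟩
  ext
  exact congrArg (fun x : H => (x : G)) (hz ⟨w, hwH⟩)

variable [TopologicalSpace G] {H : Subgroup G}

theorem IsSlim.mem_ker_of_mem_center {Q : Type*} [Group Q] [TopologicalSpace Q] (hQ : IsSlim Q)
    {f : G →* Q} (hf : IsOpenMap f) (hH : IsOpen (H : Set G)) {z : H} (hz : z ∈ center H) :
    (z : G) ∈ f.ker := by
  have hz' := hQ (H.map f) (hf _ hH) ▸ f.subgroupMap_mem_center hz
  exact congrArg Subtype.val (mem_bot.mp hz')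

theorem IsSlim.eq_one_of_mem_center {N : Subgroup G} (hN : IsSlim N) (hH : IsOpen (H : Set G))
    {z : H} (hz : z ∈ center H) (hzN : (z : G) ∈ N) : z = 1 := by
  have hopen : IsOpen (H.subgroupOf N : Set N) := hH.preimage continuous_subtype_val
  have hz' := hN _ hopen ▸ mem_center_subgroupOf hz hzN
  exact Subtype.ext (congrArg (fun x : H.subgroupOf N => ((x : N) : G)) (mem_bot.mp hz'))

end

theorem slim_of_slim_normal_of_slim_quotient_general
    {G : Type*} [Group G] [TopologicalSpace G] [IsTopologicalGroup G]
    (N : Subgroup G) [N.Normal]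
    (hN : IsSlim ↥N) (hQ : IsSlim (G ⧸ N)) : IsSlim G := by
  intro H hH
  rw [eq_bot_iff_forall]
  intro z hz
  have hzN : (z : G) ∈ N := QuotientGroup.ker_mk' N ▸
    hQ.mem_ker_of_mem_center (f := QuotientGroup.mk' N) QuotientGroup.isOpenMap_coe hH hz
  exact hN.eq_one_of_mem_center hH hz hzN

/-- An extension of slim profinite groups is slim: if `G` is a profinite group
(compact, Hausdorff, totally disconnected topological group) and `N` is a closed
normal subgroup such that both `N` (with the subspace topology) and the quotient
topological group `G ⧸ N` are slim, then `G` is slim. -/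
theorem slim_of_slim_normal_of_slim_quotient
    {G : Type*} [Group G] [TopologicalSpace G] [IsTopologicalGroup G]
    [CompactSpace G] [T2Space G] [TotallyDisconnectedSpace G]
    (N : Subgroup G) [N.Normal] (hNclosed : IsClosed (N : Set G))
    (hN : IsSlim ↥N) (hQ : IsSlim (G ⧸ N)) : IsSlim G :=
  slim_of_slim_normal_of_slim_quotient_general N hN hQ
end

section
/- Let Π be a group, Δ a normal subgroup of Π, and I a subgroup of Δ such that the normalizer of I in Δ equals I. Let D be a subgroup of Π such that D normalizes I, D ∩ Δ = I, and every element of Π can be written as a product d·δ with d ∈ D and δ ∈ Δ. Then the normalizer of I in Π equals D. -/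
namespace Subgroup

variable {G : Type*} [Group G]

theorem normalizer_inf_le_of_normalizer_subgroupOf_eq {H K : Subgroup G}
    (hH : normalizer ((H.subgroupOf K : Subgroup K) : Set K) = H.subgroupOf K) :
    normalizer (H : Set G) ⊓ K ≤ H := by
  rintro x ⟨hxN, hxK⟩
  have hx : (⟨x, hxK⟩ : K) ∈ normalizer ((H.subgroupOf K : Subgroup K) : Set K) :=
    le_normalizer_comap K.subtype hxN
  rw [hH] at hx
  exact hx

theorem le_of_inf_le_of_forall_eq_mul {D N K : Subgroup G} (hDN : D ≤ N) (hNK : N ⊓ K ≤ D)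
    (hDK : ∀ g : G, ∃ d ∈ D, ∃ k ∈ K, g = d * k) : N ≤ D := by
  intro g hg
  obtain ⟨d, hd, k, hk, rfl⟩ := hDK g
  have hkN : k ∈ N := by simpa using mul_mem (inv_mem (hDN hd)) hg
  exact mul_mem hd (hNK ⟨hkN, hk⟩)

end Subgroup

theorem normalizer_eq_of_normallyTerminal_in_normal_general
    {P : Type*} [Group P] (Δ D I : Subgroup P)
    (hterm : Subgroup.normalizer ((I.subgroupOf Δ : Subgroup Δ) : Set Δ) = I.subgroupOf Δ)
    (hDnorm : D ≤ Subgroup.normalizer (I : Set P))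
    (hDΔ : D ⊓ Δ = I)
    (hgen : ∀ p : P, ∃ d ∈ D, ∃ δ ∈ Δ, p = d * δ) :
    Subgroup.normalizer (I : Set P) = D := by
  have hNΔ : Subgroup.normalizer (I : Set P) ⊓ Δ ≤ D :=
    (Subgroup.normalizer_inf_le_of_normalizer_subgroupOf_eq hterm).trans
      (hDΔ ▸ inf_le_left)
  exact le_antisymm (Subgroup.le_of_inf_le_of_forall_eq_mul hDnorm hNΔ hgen) hDnorm

/-- Let `Δ` be a normal subgroup of a group `Π`, and `I ≤ Δ` a subgroup which is
normally terminal in `Δ` (i.e. the normalizer of `I` in `Δ` is `I`).  If `D` is a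
subgroup of `Π` normalizing `I` with `D ⊓ Δ = I` and such that every element of
`Π` is a product `d * δ` with `d ∈ D`, `δ ∈ Δ`, then the normalizer of `I` in `Π`
equals `D`. -/
theorem normalizer_eq_of_normallyTerminal_in_normal
    {P : Type*} [Group P] (Δ D I : Subgroup P) [Δ.Normal]
    (hIΔ : I ≤ Δ)
    (hterm : Subgroup.normalizer ((I.subgroupOf Δ : Subgroup Δ) : Set Δ) = I.subgroupOf Δ)
    (hDnorm : D ≤ Subgroup.normalizer (I : Set P))
    (hDΔ : D ⊓ Δ = I)
    (hgen : ∀ p : P, ∃ d ∈ D, ∃ δ ∈ Δ, p = d * δ) :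
    Subgroup.normalizer (I : Set P) = D :=
  normalizer_eq_of_normallyTerminal_in_normal_general Δ D I hterm hDnorm hDΔ hgen
end

section
/- Let K be a field, V a finite-dimensional K-vector space, f : V → V a linear endomorphism, and W an f-invariant subspace of V. If the characteristic polynomial of the restriction of f to W and the characteristic polynomial of the endomorphism induced by f on the quotient V/W are coprime in K[X], then there exists a unique f-invariant subspace W' of V such that V is the internal direct sum of W and W'. -/
open Polynomial

private lemma aeval_restrict_coe {K V : Type*} [Field K] [AddCommGroup V] [Module K V]
    (f : V →ₗ[K] V) (W : Submodule K V) (hW : ∀ x ∈ W, f x ∈ W) (r : K[X]) (x : W) :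
    (aeval f r) (x : V) = ((aeval (f.restrict hW) r) x : V) := by
  induction r using Polynomial.induction_on' with
  | add p q hp hq => simp [hp, hq]
  | monomial n a =>
    simp only [aeval_monomial, Module.End.mul_apply, Module.algebraMap_end_apply,
      LinearMap.smul_apply, Submodule.coe_smul]
    congr 1
    rw [Module.End.pow_restrict (f' := f) n hW, LinearMap.restrict_coe_apply]

private lemma mkQ_aeval {K V : Type*} [Field K] [AddCommGroup V] [Module K V]
    (f : V →ₗ[K] V) (W : Submodule K V) (hW : ∀ x ∈ W, f x ∈ W) (r : K[X]) (x : V) :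
    W.mkQ ((aeval f r) x) = (aeval (Submodule.mapQ W W f hW) r) (W.mkQ x) := by
  induction r using Polynomial.induction_on' with
  | add p q hp hq =>
    simp only [map_add, LinearMap.add_apply]
    rw [hp, hq]
  | monomial n a =>
    simp only [aeval_monomial, Module.End.mul_apply, Module.algebraMap_end_apply,
      LinearMap.smul_apply, map_smul]
    congr 1
    induction n with
    | zero => simp
    | succ k ih =>
      rw [pow_succ', pow_succ', Module.End.mul_apply, Module.End.mul_apply, ← ih,
        Submodule.mkQ_apply, Submodule.mkQ_apply, Submodule.mapQ_apply]

/-- Let `V` be a finite-dimensional vector space over a field `K`, `f` an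
endomorphism of `V` and `W` an `f`-invariant subspace.  If the characteristic
polynomial of `f` restricted to `W` is coprime to the characteristic polynomial of
the endomorphism induced by `f` on `V ⧸ W`, then there is a unique `f`-invariant
complement `W'` of `W` in `V`. -/
theorem existsUnique_invariant_compl_of_isCoprime_charpoly
    {K V : Type*} [Field K] [AddCommGroup V] [Module K V] [FiniteDimensional K V]
    (f : V →ₗ[K] V) (W : Submodule K V) (hW : ∀ x ∈ W, f x ∈ W)
    (hcop : IsCoprime (LinearMap.charpoly (f.restrict hW))
      (LinearMap.charpoly (Submodule.mapQ W W f hW))) :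
    ∃! W' : Submodule K V, (∀ x ∈ W', f x ∈ W') ∧ IsCompl W W' := by
  set p := LinearMap.charpoly (f.restrict hW) with hp
  set q := LinearMap.charpoly (Submodule.mapQ W W f hW) with hq
  obtain ⟨a, b, hab⟩ := hcop
  -- key facts
  have hpW : ∀ x ∈ W, (aeval f p) x = 0 := by
    intro x hx
    rw [show x = ((⟨x, hx⟩ : W) : V) from rfl, aeval_restrict_coe f W hW]
    rw [LinearMap.aeval_self_charpoly]
    simp
  have hqQ : ∀ x : V, (aeval f q) x ∈ W := by
    intro x
    have h := mkQ_aeval f W hW q x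
    rw [LinearMap.aeval_self_charpoly, LinearMap.zero_apply] at h
    rwa [← Submodule.Quotient.mk_eq_zero W, ← Submodule.mkQ_apply]
  -- the candidate complement
  set W' : Submodule K V := LinearMap.ker (aeval f q) with hW'
  have hker : ∀ x, x ∈ W' ↔ (aeval f q) x = 0 := fun x => Iff.rfl
  have hcomm : ∀ r s : K[X], aeval f r ∘ₗ aeval f s = aeval f (r * s) := by
    intro r s; rw [map_mul]; rfl
  have hinv : ∀ x ∈ W', f x ∈ W' := by
    intro x hx
    have : (aeval f q) (f x) = f ((aeval f q) x) := by
      have h1 := LinearMap.congr_fun (hcomm q X) x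
      have h2 := LinearMap.congr_fun (hcomm X q) x
      simp only [LinearMap.comp_apply, aeval_X] at h1 h2
      rw [h1, h2, mul_comm q X]
    rw [hker] at hx ⊢
    rw [this, hx, map_zero]
  have hdisj : W ⊓ W' = ⊥ := by
    rw [Submodule.eq_bot_iff]
    rintro x hx
    obtain ⟨hxW, hxW'⟩ := Submodule.mem_inf.mp hx
    have hx1 : x = (aeval f (a * p)) x + (aeval f (b * q)) x := by
      have := congrArg (fun r => (aeval f r) x) hab
      simpa [map_add] using this.symm
    rw [hker] at hxW'
    have h1 : (aeval f (a * p)) x = 0 := by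
      rw [map_mul, Module.End.mul_apply, hpW x hxW, map_zero]
    have h2 : (aeval f (b * q)) x = 0 := by
      rw [map_mul, Module.End.mul_apply, hxW', map_zero]
    rw [h1, h2, add_zero] at hx1
    exact hx1
  have hsup : W ⊔ W' = ⊤ := by
    rw [Submodule.eq_top_iff']
    intro v
    have hv : v = (aeval f (b * q)) v + (aeval f (a * p)) v := by
      have h := congrArg (fun r => (aeval f r) v) hab
      simp only [map_add, map_one, LinearMap.add_apply, Module.End.one_apply] at h
      exact h.symm.trans (add_comm _ _)
    have h1 : (aeval f (b * q)) v ∈ W := by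
      rw [map_mul, Module.End.mul_apply]
      have hq' := hqQ v
      have := hW  -- invariance
      -- b(f) preserves W since W is invariant under f
      have hWpoly : ∀ r : K[X], ∀ x ∈ W, (aeval f r) x ∈ W := by
        intro r x hx
        rw [show x = ((⟨x, hx⟩ : W) : V) from rfl, aeval_restrict_coe f W hW]
        exact Submodule.coe_mem _
      exact hWpoly b _ hq'
    have h2 : (aeval f (a * p)) v ∈ W' := by
      rw [hker]
      have : aeval f q ∘ₗ aeval f (a * p) = aeval f (a * (p * q)) := by
        rw [hcomm]; ring_nf
      have hz : ∀ x, (aeval f (p * q)) x = 0 := by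
        intro x
        rw [map_mul, Module.End.mul_apply]
        exact hpW _ (hqQ x)
      have := LinearMap.congr_fun this v
      rw [LinearMap.comp_apply] at this
      rw [this, map_mul, Module.End.mul_apply, hz, map_zero]
    rw [hv]
    exact Submodule.add_mem_sup h1 h2
  refine ⟨W', ⟨hinv, ⟨disjoint_iff.mpr hdisj, codisjoint_iff.mpr hsup⟩⟩, ?_⟩
  rintro W'' ⟨hinv'', hcompl''⟩
  -- W'' ⊆ W'
  have hle : W'' ≤ W' := by
    intro x hx
    rw [hker]
    have h1 : (aeval f q) x ∈ W := hqQ x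
    have hWpoly'' : ∀ r : K[X], ∀ y ∈ W'', (aeval f r) y ∈ W'' := by
      intro r y hy
      rw [show y = ((⟨y, hy⟩ : W'') : V) from rfl, aeval_restrict_coe f W'' hinv'']
      exact Submodule.coe_mem _
    have h2 : (aeval f q) x ∈ W'' := hWpoly'' q x hx
    have := hcompl''.disjoint.le_bot ⟨h1, h2⟩
    simpa using this
  -- complements with one contained in the other are equal
  apply le_antisymm hle
  intro x hx
  have hx' : x ∈ W ⊔ W'' := by rw [hcompl''.sup_eq_top]; trivial
  obtain ⟨w, hw, w'', hw'', rfl⟩ := Submodule.mem_sup.mp hx'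
  have hwW' : w ∈ W' := by
    have : w = (w + w'') - w'' := by abel
    rw [this]
    exact Submodule.sub_mem _ hx (hle hw'')
  have : w ∈ W ⊓ W' := ⟨hw, hwW'⟩
  rw [hdisj] at this
  simp only [Submodule.mem_bot] at this
  rw [this, zero_add]
  exact hw''
end

section
/- Let E and E' be groups, N ⊴ E and N' ⊴ E' normal subgroups whose centers are trivial, β : N ≅ N' an isomorphism of groups, and θ : E/N ≅ E'/N' an isomorphism of groups. Assume compatibility of outer actions: for all e ∈ E and e' ∈ E' with θ(eN) = e'N', there exists n₀ ∈ N' such that β(e·n·e⁻¹) = n₀·(e'·β(n)·e'⁻¹)·n₀⁻¹ for all n ∈ N. Then there exists a unique isomorphism Φ : E ≅ E' such that Φ(n) = β(n) for all n ∈ N and Φ(e)·N' = θ(eN) for all e ∈ E. -/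
private lemma conj_eq_of_center_bot {G : Type*} [Group G] (H : Subgroup G) [H.Normal]
    (hc : Subgroup.center ↥H = ⊥) {x y : G}
    (hq : (QuotientGroup.mk x : G ⧸ H) = QuotientGroup.mk y)
    (hconj : ∀ n : ↥H, x * ↑n * x⁻¹ = y * ↑n * y⁻¹) : x = y := by
  have hm : x⁻¹ * y ∈ H := QuotientGroup.eq.mp hq
  have hcen : (⟨x⁻¹ * y, hm⟩ : ↥H) ∈ Subgroup.center ↥H := by
    rw [Subgroup.mem_center_iff]
    intro g
    ext
    push_cast
    calc (g : G) * (x⁻¹ * y) = x⁻¹ * (x * ↑g * x⁻¹) * y := by group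
      _ = x⁻¹ * (y * ↑g * y⁻¹) * y := by rw [hconj g]
      _ = (x⁻¹ * y) * ↑g := by group
  rw [hc, Subgroup.mem_bot] at hcen
  have h1 : x⁻¹ * y = 1 := congrArg Subtype.val hcen
  exact (inv_mul_eq_one.mp h1)

private lemma exists_hom_glue {E E' : Type*} [Group E] [Group E']
    (N : Subgroup E) (N' : Subgroup E') [hN : N.Normal] [hN' : N'.Normal]
    (hc' : Subgroup.center ↥N' = ⊥)
    (β : ↥N ≃* ↥N') (θ : E ⧸ N ≃* E' ⧸ N')
    (hcompat : ∀ (e : E) (e' : E'),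
      θ (QuotientGroup.mk e) = QuotientGroup.mk e' →
      ∃ n₀ ∈ N', ∀ n : ↥N,
        (β ⟨e * ↑n * e⁻¹, hN.conj_mem ↑n n.2 e⟩ : E')
          = n₀ * (e' * ↑(β n) * e'⁻¹) * n₀⁻¹) :
    ∃ φ : E →* E', (∀ n : ↥N, φ ↑n = ↑(β n)) ∧
      (∀ e : E, (QuotientGroup.mk (φ e) : E' ⧸ N') = θ (QuotientGroup.mk e)) ∧
      (∀ (e : E) (n : ↥N), φ e * ↑(β n) * (φ e)⁻¹
          = ↑(β ⟨e * ↑n * e⁻¹, hN.conj_mem ↑n n.2 e⟩)) := by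
  set P : E → E' → Prop := fun e x =>
    (QuotientGroup.mk x : E' ⧸ N') = θ (QuotientGroup.mk e) ∧
    ∀ n : ↥N, x * ↑(β n) * x⁻¹ = ↑(β ⟨e * ↑n * e⁻¹, hN.conj_mem ↑n n.2 e⟩) with hP
  have huniq : ∀ e x y, P e x → P e y → x = y := by
    intro e x y hx hy
    refine conj_eq_of_center_bot N' hc' (hx.1.trans hy.1.symm) ?_
    intro n'
    have h1 := hx.2 (β.symm n')
    have h2 := hy.2 (β.symm n')
    rw [β.apply_symm_apply] at h1 h2
    exact h1.trans h2.symm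
  have hex : ∀ e, ∃ x, P e x := by
    intro e
    obtain ⟨e', he'⟩ := QuotientGroup.mk_surjective (θ (QuotientGroup.mk e))
    obtain ⟨n₀, hn₀, h⟩ := hcompat e e' he'.symm
    refine ⟨n₀ * e', ?_, ?_⟩
    · have : (QuotientGroup.mk (n₀ * e') : E' ⧸ N') = QuotientGroup.mk e' := by
        rw [QuotientGroup.eq]
        simpa [mul_assoc] using hN'.conj_mem n₀⁻¹ (inv_mem hn₀) e'⁻¹
      rw [this, he']
    · intro n
      rw [h n]
      group
  choose f hf using hex
  have hone : P 1 1 := by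
    constructor
    · simp
    · intro n
      have hn : (⟨(1:E) * ↑n * 1⁻¹, hN.conj_mem ↑n n.2 1⟩ : ↥N) = n := by
        ext; simp
      rw [hn]; group
  have hβres : ∀ n : ↥N, P ↑n ↑(β n) := by
    intro n
    constructor
    · have h1 : (QuotientGroup.mk (↑(β n) : E') : E' ⧸ N') = 1 :=
        (QuotientGroup.eq_one_iff _).mpr (β n).2
      have h2 : (QuotientGroup.mk (↑n : E) : E ⧸ N) = 1 :=
        (QuotientGroup.eq_one_iff _).mpr n.2
      rw [h1, h2, map_one]
    · intro m
      have hn : (⟨(↑n : E) * ↑m * (↑n : E)⁻¹, hN.conj_mem ↑m m.2 ↑n⟩ : ↥N)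
          = n * m * n⁻¹ := by ext; push_cast; rfl
      rw [hn, map_mul, map_mul, map_inv]
      push_cast
      rfl
  have hmul : ∀ a b, P (a * b) (f a * f b) := by
    intro a b
    constructor
    · rw [QuotientGroup.mk_mul, (hf a).1, (hf b).1, ← map_mul, ← QuotientGroup.mk_mul]
    · intro n
      have hb := (hf b).2 n
      have ha := (hf a).2 ⟨b * ↑n * b⁻¹, hN.conj_mem ↑n n.2 b⟩
      have hsub : (⟨a * ↑(⟨b * ↑n * b⁻¹, hN.conj_mem ↑n n.2 b⟩ : ↥N) * a⁻¹,
            hN.conj_mem _ (hN.conj_mem ↑n n.2 b) a⟩ : ↥N)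
          = ⟨(a * b) * ↑n * (a * b)⁻¹, hN.conj_mem ↑n n.2 (a * b)⟩ := by
        ext; show a * (b * ↑n * b⁻¹) * a⁻¹ = (a * b) * ↑n * (a * b)⁻¹; group
      calc (f a * f b) * ↑(β n) * (f a * f b)⁻¹
          = f a * (f b * ↑(β n) * (f b)⁻¹) * (f a)⁻¹ := by group
        _ = f a * ↑(β ⟨b * ↑n * b⁻¹, hN.conj_mem ↑n n.2 b⟩) * (f a)⁻¹ := by rw [hb]
        _ = ↑(β ⟨(a * b) * ↑n * (a * b)⁻¹, hN.conj_mem ↑n n.2 (a * b)⟩) := by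
            rw [ha, hsub]
  refine ⟨{ toFun := f, map_one' := huniq 1 _ _ (hf 1) hone,
            map_mul' := fun a b => huniq (a * b) _ _ (hf (a * b)) (hmul a b) }, ?_, ?_, ?_⟩
  · intro n
    exact huniq ↑n _ _ (hf ↑n) (hβres n)
  · intro e
    exact (hf e).1
  · intro e n
    exact (hf e).2 n


/-- Gluing isomorphisms of extensions with center-free kernel: given groups `E`,
`E'` with center-free normal subgroups `N ⊴ E`, `N' ⊴ E'`, an isomorphism
`β : N ≅ N'`, an isomorphism `θ : E/N ≅ E'/N'`, and compatibility of the outer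
actions (for `e`, `e'` with `θ (e N) = e' N'`, conjugation by `e` transported by
`β` agrees with conjugation by `e'` up to an inner automorphism of `N'`), there
is a unique isomorphism `Φ : E ≅ E'` restricting to `β` on `N` and inducing `θ`
on the quotients. -/
theorem existsUnique_extension_isomorphism_of_compatible_outer_actions
    {E E' : Type*} [Group E] [Group E']
    (N : Subgroup E) (N' : Subgroup E') [hN : N.Normal] [hN' : N'.Normal]
    (hc : Subgroup.center ↥N = ⊥) (hc' : Subgroup.center ↥N' = ⊥)
    (β : ↥N ≃* ↥N') (θ : E ⧸ N ≃* E' ⧸ N')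
    (hcompat : ∀ (e : E) (e' : E'),
      θ (QuotientGroup.mk e) = QuotientGroup.mk e' →
      ∃ n₀ ∈ N', ∀ n : ↥N,
        (β ⟨e * ↑n * e⁻¹, hN.conj_mem ↑n n.2 e⟩ : E')
          = n₀ * (e' * ↑(β n) * e'⁻¹) * n₀⁻¹) :
    ∃! Φ : E ≃* E', (∀ n : ↥N, Φ ↑n = ↑(β n)) ∧
      ∀ e : E, (QuotientGroup.mk (Φ e) : E' ⧸ N') = θ (QuotientGroup.mk e) := by
  have hcompat' : ∀ (e' : E') (e : E),
      θ.symm (QuotientGroup.mk e') = QuotientGroup.mk e →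
      ∃ m₀ ∈ N, ∀ n' : ↥N',
        (↑(β.symm ⟨e' * ↑n' * e'⁻¹, hN'.conj_mem ↑n' n'.2 e'⟩) : E)
          = m₀ * (e * ↑(β.symm n') * e⁻¹) * m₀⁻¹ := by
    intro e' e he
    have hθ : θ (QuotientGroup.mk e) = QuotientGroup.mk e' := by
      rw [← he, θ.apply_symm_apply]
    obtain ⟨n₀, hn₀, h⟩ := hcompat e e' hθ
    refine ⟨(↑(β.symm ⟨n₀, hn₀⟩) : E)⁻¹, inv_mem (β.symm ⟨n₀, hn₀⟩).2, ?_⟩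
    intro n'
    have hkey := h (β.symm n')
    rw [β.apply_symm_apply] at hkey
    have hsub : (⟨e' * ↑n' * e'⁻¹, hN'.conj_mem ↑n' n'.2 e'⟩ : ↥N')
        = (⟨n₀, hn₀⟩ : ↥N')⁻¹
            * β ⟨e * ↑(β.symm n') * e⁻¹, hN.conj_mem ↑(β.symm n') (β.symm n').2 e⟩
            * ⟨n₀, hn₀⟩ := by
      ext
      push_cast
      rw [hkey]
      group
    rw [hsub, map_mul, map_mul, map_inv, β.symm_apply_apply]
    push_cast
    group
  obtain ⟨φ, hφβ, hφθ, hφc⟩ := exists_hom_glue N N' hc' β θ hcompat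
  obtain ⟨ψ, hψβ, hψθ, hψc⟩ := exists_hom_glue N' N hc β.symm θ.symm hcompat'
  have hleft : ∀ e, ψ (φ e) = e := by
    intro e
    apply conj_eq_of_center_bot N hc
    · rw [hψθ, hφθ, MulEquiv.symm_apply_apply]
    · intro n
      have h1 := hψc (φ e) (β n)
      rw [β.symm_apply_apply] at h1
      have hsub : (⟨φ e * ↑(β n) * (φ e)⁻¹, hN'.conj_mem ↑(β n) (β n).2 (φ e)⟩ : ↥N')
          = β ⟨e * ↑n * e⁻¹, hN.conj_mem ↑n n.2 e⟩ := Subtype.ext (hφc e n)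
      rw [hsub, β.symm_apply_apply] at h1
      exact h1
  have hright : ∀ x, φ (ψ x) = x := by
    intro x
    apply conj_eq_of_center_bot N' hc'
    · rw [hφθ, hψθ, MulEquiv.apply_symm_apply]
    · intro n'
      have h1 := hφc (ψ x) (β.symm n')
      rw [β.apply_symm_apply] at h1
      have hsub : (⟨ψ x * ↑(β.symm n') * (ψ x)⁻¹,
            hN.conj_mem ↑(β.symm n') (β.symm n').2 (ψ x)⟩ : ↥N)
          = β.symm ⟨x * ↑n' * x⁻¹, hN'.conj_mem ↑n' n'.2 x⟩ := Subtype.ext (hψc x n')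
      rw [hsub, β.apply_symm_apply] at h1
      exact h1
  refine ⟨{ toFun := φ, invFun := ψ, left_inv := hleft, right_inv := hright,
            map_mul' := φ.map_mul }, ⟨hφβ, hφθ⟩, ?_⟩
  rintro Φ' ⟨hβ', hθ'⟩
  ext e
  show Φ' e = φ e
  apply conj_eq_of_center_bot N' hc'
  · rw [hθ' e, hφθ e]
  · intro n'
    have h2 := hφc e (β.symm n')
    rw [β.apply_symm_apply] at h2
    rw [h2, ← hβ' ⟨e * ↑(β.symm n') * e⁻¹, hN.conj_mem ↑(β.symm n') (β.symm n').2 e⟩]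
    show Φ' e * ↑n' * (Φ' e)⁻¹ = Φ' (e * ↑(β.symm n') * e⁻¹)
    have h3 := hβ' (β.symm n')
    rw [β.apply_symm_apply] at h3
    rw [map_mul, map_mul, map_inv, h3]
end
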